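/- Let $n\ge 1$ and $a_1,\dots,a_n\ge 2$ integers, with sequences $\mu$ and $\Delta$ defined by $\mu_1=1$, $\mu_2=a_1$, $\mu_i=a_{i-1}\mu_{i-1}-\mu_{i-2}$ and $\Delta[-1]=0$, $\Delta[0]=1$, $\Delta[i]=-a_i\Delta[i-1]-\Delta[i-2]$. Let $r_1,\dots,r_n$ be integers with $|r_i|\le a_i-2$ and $r_i\equiv a_i \pmod 2$ for all $i$. If $\sum_{i=1}^n r_i\mu_i \equiv 0 \pmod{|\Delta[n]|}$, then all $a_i$ are even. -/

import Mathlib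

/-!
Write `c` for the negative continuant `c₀ = 0, c₁ = 1, c_{k+2} = a_{k+1} c_{k+1} - c_k`; then
`μ_i = c_i`, `Δ[n] = ± c_{n+1}`, and `a_i ≥ 2` makes `c` nonnegative and increasing.
Telescoping gives `∑_{i ≤ k} (a_i - 2) c_i = c_{k+1} - c_k - 1`, so the bound `|r_i| ≤ a_i - 2`
makes `|∑_{i ≤ k} r_i c_i| < c_{k+1} - c_k ≤ c_{k+1}`. A multiple of `c_{n+1}` that small
vanishes, and then the same bound forces the top coefficient, and inductively every `r_i`, to
vanish, like digits in a mixed-radix expansion. Parity then makes every `a_i` even.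
-/

open Finset

lemma two_le_of_abs_le_sub_two {x y : ℤ} (h : |x| ≤ y - 2) : 2 ≤ y := by
  linarith [abs_nonneg x]

def negContinuant (a : ℕ → ℤ) : ℕ → ℤ
  | 0 => 0
  | 1 => 1
  | k + 2 => a (k + 1) * negContinuant a (k + 1) - negContinuant a k

namespace negContinuant

variable {a : ℕ → ℤ}

@[simp] lemma zero : negContinuant a 0 = 0 := rfl

@[simp] lemma one : negContinuant a 1 = 1 := rfl

lemma succ_succ (k : ℕ) :
    negContinuant a (k + 2) = a (k + 1) * negContinuant a (k + 1) - negContinuant a k := rfl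

lemma nonneg_and_lt_succ {k : ℕ} (ha : ∀ i, 1 ≤ i → i ≤ k → 2 ≤ a i) :
    0 ≤ negContinuant a k ∧ negContinuant a k < negContinuant a (k + 1) := by
  induction k with
  | zero => simp
  | succ k ih =>
    obtain ⟨hk, hlt⟩ := ih fun i h1 h2 => ha i h1 (by omega)
    have hak := ha (k + 1) (by omega) le_rfl
    rw [succ_succ]
    constructor <;> nlinarith

lemma sum_Icc_sub_two_mul (k : ℕ) :
    ∑ i ∈ Icc 1 k, (a i - 2) * negContinuant a i
      = negContinuant a (k + 1) - negContinuant a k - 1 := by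
  induction k with
  | zero => simp
  | succ k ih =>
    rw [sum_Icc_succ_top (by omega), ih, succ_succ]
    ring

lemma nonneg {k : ℕ} (ha : ∀ i, 1 ≤ i → i ≤ k → 2 ≤ a i) {i : ℕ} (hi : i ≤ k) :
    0 ≤ negContinuant a i :=
  (nonneg_and_lt_succ fun j h1 h2 => ha j h1 (by omega)).1

lemma abs_sum_Icc_mul_le {k : ℕ} {r : ℕ → ℤ} (hr : ∀ i, 1 ≤ i → i ≤ k → |r i| ≤ a i - 2) :
    |∑ i ∈ Icc 1 k, r i * negContinuant a i|
      ≤ negContinuant a (k + 1) - negContinuant a k - 1 := by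
  have hc : ∀ i ∈ Icc 1 k, 0 ≤ negContinuant a i := fun i hi =>
    nonneg (fun j h1 h2 => two_le_of_abs_le_sub_two (hr j h1 h2)) (mem_Icc.mp hi).2
  calc |∑ i ∈ Icc 1 k, r i * negContinuant a i|
      ≤ ∑ i ∈ Icc 1 k, |r i| * negContinuant a i :=
        (abs_sum_le_sum_abs _ _).trans_eq <| sum_congr rfl fun i hi => by
          rw [abs_mul, abs_of_nonneg (hc i hi)]
    _ ≤ ∑ i ∈ Icc 1 k, (a i - 2) * negContinuant a i :=
        sum_le_sum fun i hi =>
          mul_le_mul_of_nonneg_right (hr i (mem_Icc.mp hi).1 (mem_Icc.mp hi).2) (hc i hi)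
    _ = _ := sum_Icc_sub_two_mul k

lemma eq_zero_of_sum_Icc_mul_eq_zero {k : ℕ} {r : ℕ → ℤ}
    (hr : ∀ i, 1 ≤ i → i ≤ k → |r i| ≤ a i - 2)
    (hsum : ∑ i ∈ Icc 1 k, r i * negContinuant a i = 0) :
    ∀ i, 1 ≤ i → i ≤ k → r i = 0 := by
  induction k with
  | zero => intro i h1 h2; omega
  | succ k ih =>
    have hr' : ∀ i, 1 ≤ i → i ≤ k → |r i| ≤ a i - 2 := fun i h1 h2 => hr i h1 (by omega)
    rw [sum_Icc_succ_top (by omega)] at hsum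
    have htop : r (k + 1) = 0 := by
      have hbound := abs_sum_Icc_mul_le hr'
      have hmono := nonneg_and_lt_succ fun i h1 h2 => two_le_of_abs_le_sub_two (hr' i h1 h2)
      rw [eq_neg_of_add_eq_zero_left hsum, abs_neg, abs_mul,
        abs_of_nonneg (by linarith : 0 ≤ negContinuant a (k + 1))] at hbound
      -- `|r (k+1)| * c (k+1) < c (k+1)` leaves only `|r (k+1)| = 0`
      by_contra hne
      nlinarith [abs_pos.mpr hne]
    intro i h1 h2
    rcases Nat.lt_or_ge i (k + 1) with hlt | hge
    · exact ih hr' (by simpa [htop] using hsum) i h1 (by omega)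
    · rwa [show i = k + 1 by omega]

lemma eq_of_recurrence {n : ℕ} {μ : ℕ → ℤ} (hμ1 : μ 1 = 1) (hμ2 : μ 2 = a 1)
    (hμ : ∀ i, 3 ≤ i → i ≤ n → μ i = a (i - 1) * μ (i - 1) - μ (i - 2)) :
    ∀ i, 1 ≤ i → i ≤ n → μ i = negContinuant a i := by
  intro i
  induction i using Nat.strong_induction_on with
  | _ i ih =>
    intro h1 h2
    match i with
    | 1 => exact hμ1
    | 2 => simp [hμ2, succ_succ]
    | k + 3 =>
      rw [hμ (k + 3) (by omega) h2, succ_succ]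
      exact congr_arg₂ (fun x y => a (k + 2) * x - y)
        (ih (k + 2) (by omega) (by omega) (by omega)) (ih (k + 1) (by omega) (by omega) (by omega))

lemma eq_neg_one_pow_mul_of_recurrence {n : ℕ} {D : ℕ → ℤ} (hD0 : D 0 = 0) (hD1 : D 1 = 1)
    (hD : ∀ i, 1 ≤ i → i ≤ n → D (i + 1) = -a i * D i - D (i - 1)) :
    ∀ k, k ≤ n + 1 → D k = (-1) ^ (k + 1) * negContinuant a k := by
  intro k
  induction k using Nat.strong_induction_on with
  | _ k ih =>
    intro hk
    match k with
    | 0 => simp [hD0]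
    | 1 => simp [hD1]
    | k + 2 =>
      rw [hD (k + 1) (by omega) (by omega), Nat.add_sub_cancel, ih (k + 1) (by omega) (by omega),
        ih k (by omega) (by omega), succ_succ]
      ring

end negContinuant

open negContinuant in
theorem stmt_19_general (n : ℕ) (a μ D r : ℕ → ℤ)
    (hμ1 : μ 1 = 1) (hμ2 : μ 2 = a 1)
    (hμ : ∀ i, 3 ≤ i → i ≤ n → μ i = a (i - 1) * μ (i - 1) - μ (i - 2))
    (hD0 : D 0 = 0) (hD1 : D 1 = 1)
    (hD : ∀ i, 1 ≤ i → i ≤ n → D (i + 1) = -a i * D i - D (i - 1))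
    (hr : ∀ i, 1 ≤ i → i ≤ n → |r i| ≤ a i - 2)
    (hpar : ∀ i, 1 ≤ i → i ≤ n → r i ≡ a i [ZMOD 2])
    (hsum : (|D (n + 1)|) ∣ ∑ i ∈ Finset.Icc 1 n, r i * μ i) :
    ∀ i, 1 ≤ i → i ≤ n → Even (a i) := by
  have hbound := abs_sum_Icc_mul_le hr
  have hmono := nonneg_and_lt_succ fun i h1 h2 => two_le_of_abs_le_sub_two (hr i h1 h2)
  have hΔ : |D (n + 1)| = negContinuant a (n + 1) := by
    rw [eq_neg_one_pow_mul_of_recurrence hD0 hD1 hD (n + 1) le_rfl, abs_mul, abs_neg_one_pow,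
      one_mul, abs_of_nonneg (by linarith)]
  have hsum_c : ∑ i ∈ Icc 1 n, r i * μ i = ∑ i ∈ Icc 1 n, r i * negContinuant a i :=
    sum_congr rfl fun i hi => by
      rw [eq_of_recurrence hμ1 hμ2 hμ i (mem_Icc.mp hi).1 (mem_Icc.mp hi).2]
  have hzero : ∑ i ∈ Icc 1 n, r i * negContinuant a i = 0 := by
    rw [hsum_c, hΔ] at hsum
    exact Int.eq_zero_of_abs_lt_dvd hsum (by linarith)
  intro i h1 h2
  have hri := eq_zero_of_sum_Icc_mul_eq_zero hr hzero i h1 h2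
  exact even_iff_two_dvd.mpr (by simpa [hri] using (hpar i h1 h2).dvd)

/-- `D k` denotes `Δ[k-1]`, so `Δ[n] = D (n+1)`. -/
theorem stmt_19 (n : ℕ) (hn : 1 ≤ n) (a μ D r : ℕ → ℤ)
    (ha : ∀ i, 1 ≤ i → i ≤ n → 2 ≤ a i)
    (hμ1 : μ 1 = 1) (hμ2 : μ 2 = a 1)
    (hμ : ∀ i, 3 ≤ i → i ≤ n → μ i = a (i - 1) * μ (i - 1) - μ (i - 2))
    (hD0 : D 0 = 0) (hD1 : D 1 = 1)
    (hD : ∀ i, 1 ≤ i → i ≤ n → D (i + 1) = -a i * D i - D (i - 1))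
    (hr : ∀ i, 1 ≤ i → i ≤ n → |r i| ≤ a i - 2)
    (hpar : ∀ i, 1 ≤ i → i ≤ n → r i ≡ a i [ZMOD 2])
    (hsum : (|D (n + 1)|) ∣ ∑ i ∈ Finset.Icc 1 n, r i * μ i) :
    ∀ i, 1 ≤ i → i ≤ n → Even (a i) :=
  stmt_19_general n a μ D r hμ1 hμ2 hμ hD0 hD1 hD hr hpar hsum
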